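/- For every real number c and every integer g ≥ 1, the identity 4c·[c + Σ_{m=1}^{g-1} (c − m)·(∏_{j=0}^{m-1} (2c − j)/(j+1))²] = (1/((g−1)!)²)·∏_{j=0}^{g-1} (2c − j)² holds. -/
import Mathlib

lemma aux_fact (m : ℕ) : (∏ j ∈ Finset.range m, ((j:ℝ)+1)) = Nat.factorial m := by
  induction m with
  | zero => simp
  | succ n ih => simp [Finset.prod_range_succ, Nat.factorial_succ, ih]; ring

lemma aux_prod (c : ℝ) (m : ℕ) :
    (∏ j ∈ Finset.range m, (2 * c - (j : ℝ)) / ((j : ℝ) + 1))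
      = (∏ j ∈ Finset.range m, (2 * c - (j : ℝ))) / Nat.factorial m := by
  rw [Finset.prod_div_distrib, aux_fact]

/-- Lemma 1 of the paper: for every real `c` and every integer `g ≥ 1`,
`4c·[c + Σ_{m=1}^{g-1} (c − m)·(∏_{j=0}^{m-1} (2c − j)/(j+1))²]
  = (1/((g−1)!)²)·∏_{j=0}^{g-1} (2c − j)²`. -/
theorem stmt_0 (c : ℝ) (g : ℕ) (hg : 1 ≤ g) :
    4 * c * (c + ∑ m ∈ Finset.Ico 1 g, (c - (m : ℝ)) *
      (∏ j ∈ Finset.range m, (2 * c - (j : ℝ)) / ((j : ℝ) + 1)) ^ 2)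
    = (1 / ((Nat.factorial (g - 1) : ℝ)) ^ 2) *
      ∏ j ∈ Finset.range g, (2 * c - (j : ℝ)) ^ 2 := by
  induction g, hg using Nat.le_induction with
  | base => simp [Nat.factorial]; ring
  | succ n hn ih =>
    rw [Finset.sum_Ico_succ_top hn]
    have hfn : (Nat.factorial n : ℝ) ≠ 0 := Nat.cast_ne_zero.mpr (Nat.factorial_ne_zero n)
    have hfn1 : (Nat.factorial (n-1) : ℝ) ≠ 0 := Nat.cast_ne_zero.mpr (Nat.factorial_ne_zero _)
    have hfact : ((n:ℝ)) * (Nat.factorial (n-1) : ℝ) = Nat.factorial n := by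
      rw [← Nat.cast_mul, Nat.mul_factorial_pred (by omega)]
    have hstep : 4 * c * (c + (∑ m ∈ Finset.Ico 1 n, (c - (m : ℝ)) *
        (∏ j ∈ Finset.range m, (2 * c - (j : ℝ)) / ((j : ℝ) + 1)) ^ 2
        + (c - (n : ℝ)) * (∏ j ∈ Finset.range n, (2 * c - (j : ℝ)) / ((j : ℝ) + 1)) ^ 2))
        = (1 / ((Nat.factorial (n - 1) : ℝ)) ^ 2) * ∏ j ∈ Finset.range n, (2 * c - (j : ℝ)) ^ 2
          + 4 * c * (c - (n : ℝ)) * (∏ j ∈ Finset.range n, (2 * c - (j : ℝ)) / ((j : ℝ) + 1)) ^ 2 := by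
      rw [← ih]; ring
    rw [hstep, aux_prod, Nat.add_sub_cancel, Finset.prod_range_succ, div_pow,
      Finset.prod_pow]
    field_simp
    rw [← hfact]
    ring
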